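/- arXiv:1612.03234 — 3 statements merged into one kernel-verified Lean document; each statement's English description precedes it below -/
import Mathlib

section
/- If G is a germ and p ∈ G, then the number of indices i with p(i) = 0 is at most d(d−1)/2. -/
noncomputable section

/- Ambient space: ℝ^(d²) with the standard inner product. -/
abbrev V (d : ℕ) := EuclideanSpace ℝ (Fin (d^2))

/-- The standard inner product ⟨u, v⟩ = ∑ i, u i * v i. -/
def ip {d : ℕ} (u v : V d) : ℝ := inner ℝ u v

/-- The barycenter c, with all entries equal to 1/d². -/
def cpt (d : ℕ) : V d := WithLp.toLp 2 (fun _ => 1/(d^2:ℝ))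

/-- The hyperplane H = {u : ⟨u, c⟩ = 1/d²} of vectors whose entries sum to 1. -/
def Hs (d : ℕ) : Set (V d) := {u | ip u (cpt d) = 1/(d^2:ℝ)}

/-- The polar A* = {u ∈ H : ⟨u, v⟩ ≥ 1/(d(d+1)) for all v ∈ A}. -/
def polar (d : ℕ) (A : Set (V d)) : Set (V d) :=
  {u | u ∈ Hs d ∧ ∀ v ∈ A, 1/((d:ℝ)*((d:ℝ)+1)) ≤ ip u v}

/-- cc(A): the closed convex hull of A. -/
def cc (d : ℕ) (A : Set (V d)) : Set (V d) := closure (convexHull ℝ A)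

/-- The probability simplex Δ = {u ∈ H : u i ≥ 0 for all i}. -/
def probSimplex (d : ℕ) : Set (V d) := {u | u ∈ Hs d ∧ ∀ i, 0 ≤ u i}

/-- The basis distributions e_k, with e_k(i) = (δ_{ki} + 1/d)/(d+1). -/
def basisDist (d : ℕ) (k : Fin (d^2)) : V d :=
  WithLp.toLp 2 (fun i => ((if k = i then (1:ℝ) else 0) + 1/(d:ℝ)) / ((d:ℝ)+1))

/-- The basis simplex Δ_e: the convex hull of the basis distributions. -/
def basisSimplex (d : ℕ) : Set (V d) := convexHull ℝ (Set.range (basisDist d))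

/-- The out-ball B_o = {u ∈ H : ⟨u, u⟩ ≤ 2/(d(d+1))}. -/
def outBall (d : ℕ) : Set (V d) := {u | u ∈ Hs d ∧ ip u u ≤ 2/((d:ℝ)*((d:ℝ)+1))}

/-- The out-sphere S_o = {u ∈ H : ⟨u, u⟩ = 2/(d(d+1))}. -/
def outSphere (d : ℕ) : Set (V d) := {u | u ∈ Hs d ∧ ip u u = 2/((d:ℝ)*((d:ℝ)+1))}

/-- The in-ball B_i = {u ∈ H : ‖u − c‖² ≤ 1/(d²(d²−1))}. -/
def inBall (d : ℕ) : Set (V d) :=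
  {u | u ∈ Hs d ∧ ‖u - cpt d‖^2 ≤ 1/((d:ℝ)^2*((d:ℝ)^2-1))}

/-- The in-sphere S_i = {u ∈ H : ‖u − c‖² = 1/(d²(d²−1))}. -/
def inSphere (d : ℕ) : Set (V d) :=
  {u | u ∈ Hs d ∧ ‖u - cpt d‖^2 = 1/((d:ℝ)^2*((d:ℝ)^2-1))}

/-- The mid-ball B_m = {u ∈ H : ‖u − c‖² ≤ 1/(d²(d+1))}. -/
def midBall (d : ℕ) : Set (V d) :=
  {u | u ∈ Hs d ∧ ‖u - cpt d‖^2 ≤ 1/((d:ℝ)^2*((d:ℝ)+1))}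

/-- A germ: a subset of Δ whose pairwise inner products satisfy the
fundamental inequalities 1/(d(d+1)) ≤ ⟨p, s⟩ ≤ 2/(d(d+1)). -/
def IsGerm (d : ℕ) (G : Set (V d)) : Prop :=
  G ⊆ probSimplex d ∧
  ∀ p ∈ G, ∀ s ∈ G, 1/((d:ℝ)*((d:ℝ)+1)) ≤ ip p s ∧ ip p s ≤ 2/((d:ℝ)*((d:ℝ)+1))

/-- A qplex: a self-polar subset of Δ ∩ B_o. -/
def IsQplex (d : ℕ) (Q : Set (V d)) : Prop :=
  Q ⊆ probSimplex d ∩ outBall d ∧ Q = polar d Q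

/-- Action of a d²×d² matrix on a vector: (R u)(i) = ∑ j, R i j * u j. -/
def mvec (d : ℕ) (R : Matrix (Fin (d^2)) (Fin (d^2)) ℝ) (u : V d) : V d :=
  WithLp.toLp 2 (fun i => ∑ j, R i j * u j)

/-!
By Cauchy–Schwarz on the support of `p`, `1 = (∑ p i)² ≤ #supp p · ∑ p i² ≤ #supp p · 2/(d(d+1))`,
so `p` has at least `d(d+1)/2` nonzero entries among its `d²`, leaving at most `d(d-1)/2` zeros.
-/

open Finset

theorem sq_sum_le_card_support_mul_sum_sq {ι : Type*} [Fintype ι] (f : ι → ℝ) :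
    (∑ i, f i) ^ 2 ≤ #{i | f i ≠ 0} * ∑ i, f i ^ 2 := by
  rw [← sum_filter_ne_zero]
  calc (∑ i ∈ {i | f i ≠ 0}, f i) ^ 2
      ≤ #{i | f i ≠ 0} * ∑ i ∈ {i | f i ≠ 0}, f i ^ 2 := sq_sum_le_card_mul_sum_sq
    _ ≤ #{i | f i ≠ 0} * ∑ i, f i ^ 2 := by
      refine mul_le_mul_of_nonneg_left ?_ (Nat.cast_nonneg _)
      exact sum_le_sum_of_subset_of_nonneg (subset_univ _) fun i _ _ => sq_nonneg (f i)

variable {d : ℕ}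

theorem ip_self (u : V d) : ip u u = ∑ i, u i ^ 2 := by
  simp only [ip, PiLp.inner_apply, RCLike.inner_apply, conj_trivial, sq]

theorem ip_cpt (u : V d) : ip u (cpt d) = (∑ i, u i) / (d : ℝ) ^ 2 := by
  simp only [ip, cpt, PiLp.inner_apply, RCLike.inner_apply, conj_trivial, one_div]
  rw [← mul_sum, mul_comm, div_eq_mul_inv]

theorem sum_eq_one_of_mem_Hs (hd : d ≠ 0) {u : V d} (hu : u ∈ Hs d) : ∑ i, u i = 1 := by
  have hd2 : (d : ℝ) ^ 2 ≠ 0 := by positivity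
  rw [Hs, Set.mem_ofPred_eq, ip_cpt] at hu
  rwa [one_div, div_eq_mul_inv, mul_eq_right₀ (inv_ne_zero hd2)] at hu

theorem ncard_zeros_add_card_support (u : V d) :
    {i | u i = 0}.ncard + #{i | u i ≠ 0} = d ^ 2 := by
  rw [← coe_filter_univ, Set.ncard_coe_finset, card_filter_add_card_filter_not, card_univ,
    Fintype.card_fin]

/-- a vector in a germ has at most d(d−1)/2 zero entries. -/
theorem statement4 (d : ℕ) (hd : 2 ≤ d) (G : Set (V d)) (hG : IsGerm d G)
    (p : V d) (hp : p ∈ G) :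
    {i : Fin (d^2) | p i = 0}.ncard ≤ d*(d-1)/2 := by
  have hsum : ∑ i, p i = 1 := sum_eq_one_of_mem_Hs (by omega) (hG.1 hp).1
  have hsq : ∑ i, p i ^ 2 ≤ 2 / ((d : ℝ) * ((d : ℝ) + 1)) := ip_self p ▸ (hG.2 p hp p hp).2
  have hsupp : d * (d + 1) ≤ 2 * #{i | p i ≠ 0} := by
    have hpos : (0 : ℝ) < d * (d + 1) := by positivity
    have hcs := (sq_sum_le_card_support_mul_sum_sq p).trans
      (mul_le_mul_of_nonneg_left hsq (Nat.cast_nonneg _))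
    rw [hsum, one_pow, mul_div_assoc', le_div_iff₀ hpos] at hcs
    exact_mod_cast (by push_cast; linarith : ((d * (d + 1) : ℕ) : ℝ) ≤ 2 * #{i | p i ≠ 0})
  have hcard := ncard_zeros_add_card_support p
  rw [Nat.le_div_iff_mul_le two_pos]
  zify [show 1 ≤ d by omega] at hsupp hcard ⊢
  nlinarith
end
end

section
/- Let G be a closed germ containing the principal stem 𝒮 = cc(Δ_e ∪ B_i), and let C = G ∪ (G* ∩ B_m), where B_m is the mid-ball. Then C is a closed germ, and for every germ C' containing C one has C' ∩ S_o = G ∩ S_o. -/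
noncomputable section

/-!
For points of `H`, `⟨p, s⟩ = ⟨p - c, s - c⟩ + 1/d²`, so the germ inequalities read
`-r_m² ≤ ⟨p - c, s - c⟩ ≤ r_o²`, with `r_m`, `r_o` the radii of `B_m` and `S_o` about `c`.
Since `r_m ≤ r_o`, Cauchy–Schwarz gives these bounds for a point of `B_m` against a point of
`B_m` or of `G`, and `G* ⊆ Δ` because every `e_k` lies in `G`; so `C` is a germ.

Let `u ∈ S_o` lie in a germ `C' ⊇ C` but not in `G`. For `d = 2`, `S_o ⊆ B_i ⊆ G`. For `d ≥ 3`,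
`r_m < r_o`, and by compactness of `G` the functional `⟨u - c, · - c⟩` stays below some
`M < r_o²` on `G`. For a suitable `t > 0` the point `w = c - t (u - c)` then lies in `G* ∩ B_m ⊆ C'`
while `⟨u - c, w - c⟩ = -t r_o² < -r_m²`, contradicting the germ inequality for `u, w`.
-/

open scoped RealInnerProductSpace

section

variable {E : Type*} [NormedAddCommGroup E] [InnerProductSpace ℝ E]

lemma abs_inner_le_of_norm_sq_le {x y : E} {r : ℝ} (hx : ‖x‖ ^ 2 ≤ r) (hy : ‖y‖ ^ 2 ≤ r) :
    |⟪x, y⟫| ≤ r := by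
  nlinarith [abs_real_inner_le_norm x y, two_mul_le_add_sq ‖x‖ ‖y‖]

lemma inner_sub_lt_norm_sq_of_ne {a u v : E} (hv : ‖v - a‖ ^ 2 ≤ ‖u - a‖ ^ 2) (huv : u ≠ v) :
    ⟪u - a, v - a⟫ < ‖u - a‖ ^ 2 := by
  have hpos : 0 < ‖(u - a) - (v - a)‖ ^ 2 := by
    rw [sub_sub_sub_cancel_right]
    exact pow_pos (norm_pos_iff.2 (sub_ne_zero.2 huv)) 2
  rw [norm_sub_sq_real] at hpos
  linarith

lemma exists_lt_forall_inner_sub_le {K : Set E} {a u : E} (hK : IsCompact K) (hu : u ∉ K)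
    (hKu : ∀ v ∈ K, ‖v - a‖ ^ 2 ≤ ‖u - a‖ ^ 2) :
    ∃ M < ‖u - a‖ ^ 2, ∀ v ∈ K, ⟪u - a, v - a⟫ ≤ M := by
  rcases K.eq_empty_or_nonempty with rfl | hne
  · exact ⟨‖u - a‖ ^ 2 - 1, by linarith, by simp⟩
  obtain ⟨v₀, hv₀, hmax⟩ := hK.exists_isMaxOn hne
    (f := fun v => ⟪u - a, v - a⟫) (by fun_prop)
  exact ⟨_, inner_sub_lt_norm_sq_of_ne (hKu v₀ hv₀) (fun h => hu (h ▸ hv₀)), hmax⟩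

end

lemma exists_pos_scale {m r M : ℝ} (hm : 0 < m) (hmr : m < r) (hM : M < r) :
    ∃ t > 0, t * M ≤ m ∧ t ^ 2 * r ≤ m ∧ m < t * r := by
  set N := max M ((m + r) / 2)
  have hN : 0 < N := lt_max_of_lt_right (by linarith)
  have hNr : N < r := max_lt hM (by linarith)
  have hmrN : m * r ≤ N ^ 2 := by nlinarith [le_max_right M ((m + r) / 2), sq_nonneg (r - m)]
  refine ⟨m / N, by positivity, ?_, ?_, ?_⟩
  · calc m / N * M ≤ m / N * N := by gcongr; exact le_max_left _ _
      _ = m := div_mul_cancel₀ m hN.ne'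
  · rw [div_pow, div_mul_eq_mul_div, div_le_iff₀ (by positivity)]
    nlinarith
  · rw [div_mul_eq_mul_div, lt_div_iff₀ hN]
    nlinarith

section

variable {d : ℕ} {G : Set (V d)}

lemma ip_eq_sum (u v : V d) : ip u v = ∑ i, u i * v i := by
  simp [ip, PiLp.inner_apply, mul_comm]

lemma ip_comm (u v : V d) : ip u v = ip v u := real_inner_comm v u

lemma mem_Hs_iff (hd : d ≠ 0) {u : V d} : u ∈ Hs d ↔ ∑ i, u i = 1 := by
  have : (d : ℝ) ^ 2 ≠ 0 := by positivity
  simp only [Hs, Set.mem_ofPred_eq, ip_eq_sum, cpt, ← Finset.sum_mul]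
  field_simp

lemma cpt_mem_Hs (hd : d ≠ 0) : cpt d ∈ Hs d := by
  rw [mem_Hs_iff hd]
  simp [cpt, hd]

lemma add_smul_sub_mem_Hs {p q : V d} (hp : p ∈ Hs d) (hq : q ∈ Hs d) (t : ℝ) :
    p + t • (q - p) ∈ Hs d := by
  simp only [Hs, Set.mem_ofPred_eq, ip, inner_add_left, inner_smul_left, inner_sub_left] at *
  rw [hp, hq]
  simp

lemma ip_eq_inner_sub_cpt_add (hd : d ≠ 0) {u v : V d} (hu : u ∈ Hs d) (hv : v ∈ Hs d) :
    ip u v = ⟪u - cpt d, v - cpt d⟫ + 1 / (d ^ 2 : ℝ) := by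
  have hc : ⟪cpt d, cpt d⟫ = 1 / (d ^ 2 : ℝ) := cpt_mem_Hs hd
  have hu' : ⟪u, cpt d⟫ = 1 / (d ^ 2 : ℝ) := hu
  have hv' : ⟪v, cpt d⟫ = 1 / (d ^ 2 : ℝ) := hv
  rw [ip, inner_sub_left, inner_sub_right, inner_sub_right, hu', real_inner_comm v (cpt d), hv',
    hc]
  ring

def midRadSq (d : ℕ) : ℝ := 1 / ((d : ℝ) ^ 2 * ((d : ℝ) + 1))

/-- Within `H`, the out-sphere `S_o` is the sphere of squared radius `outRadSq d` about `c`
(`mem_outSphere_iff`). -/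
def outRadSq (d : ℕ) : ℝ := ((d : ℝ) - 1) / ((d : ℝ) ^ 2 * ((d : ℝ) + 1))

lemma midRadSq_pos (hd : d ≠ 0) : 0 < midRadSq d := by
  unfold midRadSq; positivity

lemma midRadSq_le_outRadSq (hd : 2 ≤ d) : midRadSq d ≤ outRadSq d := by
  have : (2 : ℝ) ≤ d := by exact_mod_cast hd
  unfold midRadSq outRadSq
  gcongr
  linarith

lemma midRadSq_lt_outRadSq (hd : 2 < d) : midRadSq d < outRadSq d := by
  have : (3 : ℝ) ≤ d := by exact_mod_cast hd
  unfold midRadSq outRadSq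
  gcongr
  linarith

lemma one_div_mul_add_one_eq (hd : d ≠ 0) :
    1 / ((d : ℝ) * ((d : ℝ) + 1)) = 1 / (d ^ 2 : ℝ) - midRadSq d := by
  unfold midRadSq; field_simp; ring

lemma two_div_mul_add_one_eq (hd : d ≠ 0) :
    2 / ((d : ℝ) * ((d : ℝ) + 1)) = 1 / (d ^ 2 : ℝ) + outRadSq d := by
  unfold outRadSq; field_simp; ring

lemma le_ip_iff (hd : d ≠ 0) {u v : V d} (hu : u ∈ Hs d) (hv : v ∈ Hs d) :
    1 / ((d : ℝ) * ((d : ℝ) + 1)) ≤ ip u v ↔ -midRadSq d ≤ ⟪u - cpt d, v - cpt d⟫ := by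
  rw [ip_eq_inner_sub_cpt_add hd hu hv, one_div_mul_add_one_eq hd]
  constructor <;> intro h <;> linarith

lemma ip_le_iff (hd : d ≠ 0) {u v : V d} (hu : u ∈ Hs d) (hv : v ∈ Hs d) :
    ip u v ≤ 2 / ((d : ℝ) * ((d : ℝ) + 1)) ↔ ⟪u - cpt d, v - cpt d⟫ ≤ outRadSq d := by
  rw [ip_eq_inner_sub_cpt_add hd hu hv, two_div_mul_add_one_eq hd]
  constructor <;> intro h <;> linarith

lemma mem_outSphere_iff (hd : d ≠ 0) {u : V d} :
    u ∈ outSphere d ↔ u ∈ Hs d ∧ ‖u - cpt d‖ ^ 2 = outRadSq d := by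
  refine and_congr_right fun hu => ?_
  rw [ip_eq_inner_sub_cpt_add hd hu hu, two_div_mul_add_one_eq hd, real_inner_self_eq_norm_sq,
    add_comm, add_right_inj]

lemma outSphere_two_subset_inBall : outSphere 2 ⊆ inBall 2 := by
  intro u hu
  rw [mem_outSphere_iff two_ne_zero] at hu
  refine ⟨hu.1, hu.2.le.trans_eq ?_⟩
  norm_num [outRadSq]

lemma norm_sub_cpt_sq_le_of_isGerm (hd : d ≠ 0) (hG : IsGerm d G) {p : V d} (hp : p ∈ G) :
    ‖p - cpt d‖ ^ 2 ≤ outRadSq d := by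
  have hpH := (hG.1 hp).1
  rw [← real_inner_self_eq_norm_sq, ← ip_le_iff hd hpH hpH]
  exact (hG.2 p hp p hp).2

lemma ip_basisDist (hd : d ≠ 0) {u : V d} (hu : u ∈ Hs d) (k : Fin (d ^ 2)) :
    ip u (basisDist d k) = (u k + 1 / (d : ℝ)) / ((d : ℝ) + 1) := by
  rw [mem_Hs_iff hd] at hu
  simp [ip_eq_sum, basisDist, add_div, mul_add, Finset.sum_add_distrib, ← Finset.sum_mul, hu,
    mul_div_assoc', ← Finset.sum_div]

lemma polar_subset_probSimplex (hd : d ≠ 0) {A : Set (V d)} (hA : Set.range (basisDist d) ⊆ A) :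
    polar d A ⊆ probSimplex d := by
  refine fun u hu => ⟨hu.1, fun k => ?_⟩
  have h := hu.2 _ (hA ⟨k, rfl⟩)
  rw [ip_basisDist hd hu.1, add_div, div_div, le_add_iff_nonneg_left] at h
  simpa using (le_div_iff₀ (by positivity : (0 : ℝ) < d + 1)).1 h

lemma isClosed_Hs : IsClosed (Hs d) :=
  isClosed_eq (by unfold ip; fun_prop) continuous_const

lemma isClosed_polar (A : Set (V d)) : IsClosed (polar d A) := by
  have : polar d A = Hs d ∩ ⋂ v ∈ A, {u | 1 / ((d : ℝ) * ((d : ℝ) + 1)) ≤ ip u v} := by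
    ext u; simp [polar]
  rw [this]
  exact isClosed_Hs.inter (isClosed_biInter fun v _ => isClosed_le continuous_const
    (by unfold ip; fun_prop))

lemma isClosed_midBall : IsClosed (midBall d) :=
  isClosed_Hs.inter (isClosed_le (f := fun u : V d => ‖u - cpt d‖ ^ 2) (by fun_prop)
    continuous_const)

lemma isCompact_probSimplex (hd : d ≠ 0) : IsCompact (probSimplex d) := by
  have : probSimplex d = WithLp.toLp 2 '' stdSimplex ℝ (Fin (d ^ 2)) := by
    ext u
    constructor
    · rintro ⟨hu, hnn⟩
      exact ⟨WithLp.ofLp u, ⟨hnn, (mem_Hs_iff hd).1 hu⟩, rfl⟩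
    · rintro ⟨f, ⟨hnn, hsum⟩, rfl⟩
      exact ⟨(mem_Hs_iff hd).2 hsum, hnn⟩
  rw [this]
  exact (isCompact_stdSimplex ℝ _).image (PiLp.continuous_toLp 2 _)

lemma germ_bounds_of_mem_polar_inter_midBall (hd : 2 ≤ d) (hG : IsGerm d G) {p s : V d}
    (hp : p ∈ polar d G ∩ midBall d) (hs : s ∈ G ∪ (polar d G ∩ midBall d)) :
    1 / ((d : ℝ) * ((d : ℝ) + 1)) ≤ ip p s ∧ ip p s ≤ 2 / ((d : ℝ) * ((d : ℝ) + 1)) := by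
  have hd0 : d ≠ 0 := by omega
  have hmo := midRadSq_le_outRadSq hd
  obtain ⟨⟨hpH, hpG⟩, -, hpm⟩ := hp
  rcases hs with hs | ⟨⟨hsH, -⟩, -, hsm⟩
  · have hsH := (hG.1 hs).1
    have habs := abs_inner_le_of_norm_sq_le (hpm.trans hmo)
      (norm_sub_cpt_sq_le_of_isGerm hd0 hG hs)
    exact ⟨hpG s hs, (ip_le_iff hd0 hpH hsH).2 (abs_le.1 habs).2⟩
  · have habs := abs_le.1 (abs_inner_le_of_norm_sq_le hpm hsm)
    exact ⟨(le_ip_iff hd0 hpH hsH).2 habs.1, (ip_le_iff hd0 hpH hsH).2 (habs.2.trans hmo)⟩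

lemma isGerm_union_polar_inter_midBall (hd : 2 ≤ d) (hG : IsGerm d G)
    (hbasis : Set.range (basisDist d) ⊆ G) : IsGerm d (G ∪ (polar d G ∩ midBall d)) := by
  refine ⟨Set.union_subset hG.1 (Set.inter_subset_left.trans
    (polar_subset_probSimplex (by omega) hbasis)), ?_⟩
  rintro p (hp | hp) s hs
  · rcases hs with hs | hs
    · exact hG.2 p hp s hs
    · rw [ip_comm]
      exact germ_bounds_of_mem_polar_inter_midBall hd hG hs (Or.inl hp)
  · exact germ_bounds_of_mem_polar_inter_midBall hd hG hp hs

lemma exists_mem_polar_inter_midBall_ip_lt (hd : 2 < d) (hG : IsGerm d G) (hK : IsCompact G)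
    {u : V d} (hu : u ∈ outSphere d) (huG : u ∉ G) :
    ∃ w ∈ polar d G ∩ midBall d, ip u w < 1 / ((d : ℝ) * ((d : ℝ) + 1)) := by
  have hd0 : d ≠ 0 := by omega
  obtain ⟨huH, hur⟩ := (mem_outSphere_iff hd0).1 hu
  obtain ⟨M, hM, hMG⟩ := exists_lt_forall_inner_sub_le hK huG
    fun v hv => hur ▸ norm_sub_cpt_sq_le_of_isGerm hd0 hG hv
  obtain ⟨t, ht, htM, htsq, htlt⟩ :=
    exists_pos_scale (midRadSq_pos hd0) (midRadSq_lt_outRadSq hd) (hur ▸ hM)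
  set w := cpt d + (-t) • (u - cpt d)
  have hwH : w ∈ Hs d := add_smul_sub_mem_Hs (cpt_mem_Hs hd0) huH _
  have hwc : w - cpt d = (-t) • (u - cpt d) := add_sub_cancel_left _ _
  refine ⟨w, ⟨⟨hwH, fun v hv => ?_⟩, hwH, ?_⟩, ?_⟩
  · rw [le_ip_iff hd0 hwH (hG.1 hv).1, hwc, real_inner_smul_left]
    nlinarith [hMG v hv]
  · rw [hwc, norm_smul, mul_pow, hur, Real.norm_eq_abs, sq_abs, neg_sq]
    exact htsq
  · rw [← not_le, le_ip_iff hd0 huH hwH, hwc, real_inner_smul_right, real_inner_self_eq_norm_sq,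
      hur]
    linarith

end

/-- for a closed germ G containing the principal stem,
C = G ∪ (G* ∩ B_m) is a closed germ, and any germ containing C meets the
out-sphere exactly where G does. -/
theorem statement9 (d : ℕ) (hd : 2 ≤ d) (G : Set (V d)) (hG : IsGerm d G)
    (hclosed : IsClosed G) (hstem : cc d (basisSimplex d ∪ inBall d) ⊆ G) :
    IsGerm d (G ∪ (polar d G ∩ midBall d)) ∧
    IsClosed (G ∪ (polar d G ∩ midBall d)) ∧
    ∀ C' : Set (V d), IsGerm d C' → G ∪ (polar d G ∩ midBall d) ⊆ C' →
      C' ∩ outSphere d = G ∩ outSphere d := by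
  have hstem' : basisSimplex d ∪ inBall d ⊆ G :=
    ((subset_convexHull ℝ _).trans subset_closure).trans hstem
  have hbasis : Set.range (basisDist d) ⊆ G :=
    (subset_convexHull ℝ _).trans (Set.subset_union_left.trans hstem')
  refine ⟨isGerm_union_polar_inter_midBall hd hG hbasis,
    hclosed.union ((isClosed_polar G).inter isClosed_midBall), fun C' hC' hsub => ?_⟩
  refine Set.Subset.antisymm (fun u ⟨huC, huS⟩ => ⟨?_, huS⟩)
    (Set.inter_subset_inter_left _ (Set.subset_union_left.trans hsub))
  by_contra huG
  obtain rfl | hd3 := hd.eq_or_lt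
  · exact huG (Set.subset_union_right.trans hstem' (outSphere_two_subset_inBall huS))
  · have hK : IsCompact G := (isCompact_probSimplex (by omega)).of_isClosed_subset hclosed hG.1
    obtain ⟨w, hw, huw⟩ := exists_mem_polar_inter_midBall_ip_lt hd3 hG hK huS huG
    exact huw.not_ge (hC'.2 u huC w (hsub (Or.inr hw))).1
end
end

section
/- Let p₁, …, p_m be vectors in H such that ⟨p_k, p_k⟩ = 2/(d(d+1)) for every k, and ⟨p_k, p_l⟩ = 1/(d(d+1)) for all k ≠ l (a set of mutually maximally distant pure vectors). Then m ≤ d. -/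
noncomputable section

/-! With s = ∑ k, p k - m • c, the hypotheses fix the whole Gram matrix of the p k and c (note
⟨c, c⟩ = 1/d² as well), and expanding gives 0 ≤ ‖s‖² = m(m+1)/(d(d+1)) - m²/d², which forces
m ≤ d. -/

open Finset RealInnerProductSpace

theorem norm_sum_sub_card_smul_sq {E ι : Type*} [NormedAddCommGroup E] [InnerProductSpace ℝ E]
    [Fintype ι] (p : ι → E) (c : E) {a b γ : ℝ}
    (hc : ⟪c, c⟫ = γ) (hpc : ∀ k, ⟪p k, c⟫ = γ)
    (hdiag : ∀ k, ⟪p k, p k⟫ = b) (hoff : ∀ k l, k ≠ l → ⟪p k, p l⟫ = a) :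
    ‖∑ k, p k - (Fintype.card ι : ℝ) • c‖ ^ 2 =
      Fintype.card ι * b + Fintype.card ι * (Fintype.card ι - 1) * a
        - (Fintype.card ι : ℝ) ^ 2 * γ := by
  classical
  set n : ℝ := (Fintype.card ι : ℝ)
  have hgram : ∀ k l, ⟪p k, p l⟫ = a + if k = l then b - a else 0 := by
    intro k l
    split_ifs with h
    · subst h; rw [hdiag]; ring
    · rw [hoff k l h, add_zero]
  have hsum_sum : ⟪∑ k, p k, ∑ l, p l⟫ = n * b + n * (n - 1) * a := by
    simp only [sum_inner, inner_sum, hgram, sum_add_distrib, sum_ite_eq', mem_univ, if_true,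
      sum_const, card_univ, nsmul_eq_mul]
    ring
  have hsum_c : ⟪∑ k, p k, c⟫ = n * γ := by
    simp only [sum_inner, hpc, sum_const, card_univ, nsmul_eq_mul, n]
  rw [← real_inner_self_eq_norm_sq, inner_sub_sub_self, hsum_sum, real_inner_smul_left,
    real_inner_smul_right, real_inner_smul_left, real_inner_smul_right, real_inner_comm _ c, hsum_c,
    hc]
  ring

theorem le_of_sq_div_sq_le {m d : ℝ} (hm : 0 ≤ m) (hd : 0 < d)
    (h : m ^ 2 / d ^ 2 ≤ m * (m + 1) / (d * (d + 1))) : m ≤ d := by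
  rw [div_le_div_iff₀ (by positivity) (by positivity)] at h
  rcases hm.eq_or_lt with rfl | hm
  · exact hd.le
  · nlinarith [mul_pos hm hd]

theorem ip_cpt_cpt (d : ℕ) : ip (cpt d) (cpt d) = 1 / (d ^ 2 : ℝ) := by
  simp only [ip, cpt, PiLp.inner_apply, RCLike.inner_apply, conj_trivial, sum_const, card_univ,
    Fintype.card_fin, nsmul_eq_mul]
  rcases Nat.eq_zero_or_pos d with rfl | hd
  · simp
  · push_cast
    field_simp

/-- a set of mutually maximally distant pure vectors in H has at
most d elements. -/
theorem statement12 (d m : ℕ) (hd : 2 ≤ d) (p : Fin m → V d)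
    (hH : ∀ k, p k ∈ Hs d)
    (hpure : ∀ k, ip (p k) (p k) = 2/((d:ℝ)*((d:ℝ)+1)))
    (hmmd : ∀ k l, k ≠ l → ip (p k) (p l) = 1/((d:ℝ)*((d:ℝ)+1))) :
    m ≤ d := by
  have hd0 : (0 : ℝ) < d := by exact_mod_cast (by omega : 0 < d)
  have hnorm := norm_sum_sub_card_smul_sq p (cpt d) (ip_cpt_cpt d) hH hpure hmmd
  rw [Fintype.card_fin] at hnorm
  refine Nat.cast_le.mp (le_of_sq_div_sq_le (Nat.cast_nonneg m) hd0 ?_)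
  have hsq := sq_nonneg ‖∑ k, p k - (m : ℝ) • cpt d‖
  rw [hnorm] at hsq
  linarith [show (m : ℝ) * (2 / (d * (d + 1))) + m * (m - 1) * (1 / (d * (d + 1)))
      = m * (m + 1) / (d * (d + 1)) by ring, show (m : ℝ) ^ 2 * (1 / d ^ 2) = m ^ 2 / d ^ 2 by ring]
end
end
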